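/- Let A(ξ) be a family of uniformly φ-positive operators on a Banach space E and L(ξ) ∈ S_{φ₁} with φ+φ₁ < π, and suppose the scalar symbol satisfies |L(ξ)| > C|ξ|^l Σ_{k=0}^l |â_k(ξ)| where L(ξ) = Σ_{k=0}^l â_k(ξ)(iξ)^k. Then for λ ∈ S_φ with |λ| ≥ λ₀ > 0, the operator-function σ₂(ξ,λ) = Σ_{k=0}^l |λ|^{1−k/l} â_k(ξ)(iξ)^k [A(ξ)+λ+L(ξ)]^{-1} satisfies ‖σ₂(ξ,λ)‖_{B(E)} ≤ C uniformly in ξ ∈ ℝ and λ, provided â_k ∈ L^∞(ℝ). -/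

import Mathlib

/-!
Rotating by `exp (-i (arg λ + arg L) / 2)` places `λ` and `L(ξ)` symmetrically about the positive
real axis, at angles `±δ` with `|δ| ≤ (φ + φ₁) / 2 < π / 2`. The real part of the rotated sum is
`(|λ| + |L|) cos δ`, so `λ + L ∈ S_{max φ φ₁}` and `|λ + L| ≥ cos ((φ + φ₁) / 2) (|λ| + |L|)`;
the uniform resolvent bound then gives `‖R(ξ, λ + L)‖ ≲ (|λ| + |L|)⁻¹`. On the other side, weighted
AM-GM gives `|λ|^{1-k/l} |ξ|^k ≤ |λ| + |ξ|^l`, and the hypotheses on `â_k` and `L` bound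
`(|λ| + |ξ|^l) Σ |â_k|` by a multiple of `|λ| + |L|`.
-/

open Finset Complex
open scoped Real

namespace Complex

lemma abs_arg_le_of_cos_mul_norm_le_re {z : ℂ} {θ : ℝ} (hθ₀ : 0 ≤ θ) (hθπ : θ ≤ π)
    (hz : Real.cos θ * ‖z‖ ≤ z.re) : |arg z| ≤ θ := by
  rcases eq_or_ne z 0 with rfl | hz₀
  · simpa using hθ₀
  have hcos : Real.cos θ ≤ Real.cos |arg z| := by
    rwa [Real.cos_abs, cos_arg hz₀, le_div_iff₀ (norm_pos_iff.mpr hz₀)]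
  exact (Real.strictAntiOn_cos.le_iff_ge ⟨hθ₀, hθπ⟩ ⟨abs_nonneg _, abs_arg_le_pi z⟩).mp hcos

lemma re_exp_neg_mul_add_exp (r s α β : ℝ) :
    (exp (-((α + β) / 2 : ℝ) * I) * (r * exp (α * I) + s * exp (β * I))).re =
      (r + s) * Real.cos ((α - β) / 2) := by
  have hα : exp (-((α + β) / 2 : ℝ) * I) * exp (α * I) = exp (((α - β) / 2 : ℝ) * I) := by
    rw [← exp_add]; push_cast; ring_nf
  have hβ : exp (-((α + β) / 2 : ℝ) * I) * exp (β * I) = exp (-((α - β) / 2 : ℝ) * I) := by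
    rw [← exp_add]; push_cast; ring_nf
  rw [mul_add, mul_left_comm, hα, mul_left_comm, hβ, add_re, re_ofReal_mul, re_ofReal_mul,
    ← ofReal_neg, exp_ofReal_mul_I_re, exp_ofReal_mul_I_re, Real.cos_neg]
  ring

lemma re_exp_neg_mul_add (z w : ℂ) :
    (exp (-((arg z + arg w) / 2 : ℝ) * I) * (z + w)).re =
      (‖z‖ + ‖w‖) * Real.cos ((arg z - arg w) / 2) := by
  simpa only [norm_mul_exp_arg_mul_I] using re_exp_neg_mul_add_exp ‖z‖ ‖w‖ (arg z) (arg w)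

variable {φ φ₁ : ℝ} {z w : ℂ}

lemma norm_exp_neg_mul_add (z w : ℂ) :
    ‖exp (-((arg z + arg w) / 2 : ℝ) * I) * (z + w)‖ = ‖z + w‖ := by
  rw [norm_mul, ← ofReal_neg, norm_exp_ofReal_mul_I, one_mul]

lemma cos_mul_add_norm_le_norm_add (hz : |arg z| ≤ φ) (hw : |arg w| ≤ φ₁)
    (hφ : φ + φ₁ ≤ 2 * π) : Real.cos ((φ + φ₁) / 2) * (‖z‖ + ‖w‖) ≤ ‖z + w‖ := by
  have hδ : |(arg z - arg w) / 2| ≤ (φ + φ₁) / 2 := by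
    rw [abs_div, abs_two]
    linarith [abs_sub (arg z) (arg w)]
  have hcos : Real.cos ((φ + φ₁) / 2) ≤ Real.cos ((arg z - arg w) / 2) := by
    rw [← Real.cos_abs ((arg z - arg w) / 2)]
    exact Real.cos_le_cos_of_nonneg_of_le_pi (abs_nonneg _) (by linarith) hδ
  calc Real.cos ((φ + φ₁) / 2) * (‖z‖ + ‖w‖)
      ≤ (‖z‖ + ‖w‖) * Real.cos ((arg z - arg w) / 2) := by
        rw [mul_comm]; gcongr
    _ = (exp (-((arg z + arg w) / 2 : ℝ) * I) * (z + w)).re := (re_exp_neg_mul_add z w).symm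
    _ ≤ ‖z + w‖ := (re_le_norm _).trans (norm_exp_neg_mul_add z w).le

lemma abs_arg_add_le_max (hz : |arg z| ≤ φ) (hw : |arg w| ≤ φ₁) (hφ : φ + φ₁ < π) :
    |arg (z + w)| ≤ max φ φ₁ := by
  set γ := (arg z + arg w) / 2 with hγ_def
  set δ := (arg z - arg w) / 2 with hδ_def
  set u := exp (-γ * I) * (z + w) with hu
  have hmax : max φ φ₁ < π :=
    max_lt (by linarith [abs_nonneg (arg w)]) (by linarith [abs_nonneg (arg z)])
  have hγδ : |γ| + |δ| ≤ max φ φ₁ := by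
    rw [abs_le] at hz hw
    have := le_max_left φ φ₁
    have := le_max_right φ φ₁
    rcases abs_cases γ with ⟨hγ, -⟩ | ⟨hγ, -⟩ <;> rcases abs_cases δ with ⟨hδ, -⟩ | ⟨hδ, -⟩ <;>
      linarith
  have hδ : |δ| ≤ π / 2 := by
    rw [hδ_def, abs_div, abs_two]
    linarith [abs_sub (arg z) (arg w)]
  have harg_u : |arg u| ≤ |δ| := by
    refine abs_arg_le_of_cos_mul_norm_le_re (abs_nonneg _) (by linarith [Real.pi_pos]) ?_
    have hcos : 0 ≤ Real.cos δ :=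
      Real.cos_abs δ ▸ Real.cos_nonneg_of_mem_Icc ⟨by linarith [abs_nonneg δ], hδ⟩
    rw [Real.cos_abs, re_exp_neg_mul_add, norm_exp_neg_mul_add, mul_comm]
    exact mul_le_mul_of_nonneg_right (norm_add_le z w) hcos
  rcases eq_or_ne u 0 with hu₀ | hu₀
  · have : z + w = 0 := by simpa [hu, exp_ne_zero] using hu₀
    rw [this, arg_zero, abs_zero]
    exact (abs_nonneg _).trans (hz.trans (le_max_left _ _))
  have hsum : |γ + arg u| ≤ max φ φ₁ := (abs_add_le _ _).trans (by linarith)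
  have hγ : arg (exp (γ * I)) = γ := by
    rw [arg_exp_mul_I, toIocMod_eq_self]
    have : |γ| < π := by linarith [abs_nonneg δ]
    constructor <;> linarith [abs_lt.mp this]
  have hzw : z + w = exp (γ * I) * u := by
    rw [hu, ← mul_assoc, ← exp_add, neg_mul, add_neg_cancel, exp_zero, one_mul]
  rw [hzw, arg_mul (exp_ne_zero _) hu₀, hγ]
  · exact hsum
  · rw [hγ]
    constructor <;> linarith [abs_le.mp hsum]

end Complex

lemma rpow_one_sub_div_mul_pow_le_add {x y : ℝ} (hx : 0 ≤ x) (hy : 0 ≤ y) {k l : ℕ}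
    (hkl : k ≤ l) : x ^ (1 - (k : ℝ) / l) * y ^ k ≤ x + y ^ l := by
  rcases Nat.eq_zero_or_pos l with rfl | hl
  · obtain rfl : k = 0 := Nat.le_zero.mp hkl
    simp
  set t : ℝ := k / l
  have ht₀ : 0 ≤ t := by positivity
  have ht₁ : t ≤ 1 := div_le_one_of_le₀ (by exact_mod_cast hkl) (Nat.cast_nonneg l)
  have hpow : (y ^ l) ^ t = y ^ k := by
    rw [← Real.rpow_natCast y l, ← Real.rpow_mul hy, mul_div_cancel₀ _ (by positivity),
      Real.rpow_natCast]
  calc x ^ (1 - t) * y ^ k = x ^ (1 - t) * (y ^ l) ^ t := by rw [hpow]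
    _ ≤ (1 - t) * x + t * y ^ l :=
      Real.geom_mean_le_arith_mean2_weighted (by linarith) ht₀ hx (by positivity) (by ring)
    _ ≤ x + y ^ l := by nlinarith [pow_nonneg hy l]

lemma norm_sum_rpow_smul_le {F : Type*} [NormedAddCommGroup F] [NormedSpace ℂ F]
    (l : ℕ) {x : ℝ} (hx : 0 ≤ x) (ξ : ℝ) (a : ℕ → ℂ) (T : F) :
    ‖∑ k ∈ range (l + 1), ((x ^ (1 - (k : ℝ) / l) : ℝ) : ℂ) • ((a k * (I * ξ) ^ k) • T)‖ ≤
      (x + |ξ| ^ l) * (∑ k ∈ range (l + 1), ‖a k‖) * ‖T‖ := by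
  rw [mul_sum, sum_mul]
  refine (norm_sum_le _ _).trans (sum_le_sum fun k hk => ?_)
  have hkl : k ≤ l := Nat.lt_succ_iff.mp (mem_range.mp hk)
  calc ‖((x ^ (1 - (k : ℝ) / l) : ℝ) : ℂ) • ((a k * (I * ξ) ^ k) • T)‖
      = x ^ (1 - (k : ℝ) / l) * |ξ| ^ k * ‖a k‖ * ‖T‖ := by
        rw [norm_smul, norm_smul, norm_mul, norm_pow, norm_mul, norm_I, one_mul, norm_real,
          norm_real, Real.norm_eq_abs, Real.norm_eq_abs, abs_of_nonneg (by positivity)]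
        ring
    _ ≤ (x + |ξ| ^ l) * ‖a k‖ * ‖T‖ := by
        gcongr
        exact rpow_one_sub_div_mul_pow_le_add hx (abs_nonneg ξ) hkl

lemma add_mul_le_add_inv_mul_add {x y S A C N : ℝ} (hx : 0 ≤ x) (hN : 0 ≤ N) (hA : 0 ≤ A)
    (hC : 0 < C) (hS : S ≤ A) (hyS : C * y * S ≤ N) : (x + y) * S ≤ (A + C⁻¹) * (x + N) := by
  have hyS' : y * S ≤ C⁻¹ * N := by
    rwa [le_inv_mul_iff₀ hC, ← mul_assoc]
  calc (x + y) * S ≤ x * A + C⁻¹ * N := by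
        rw [add_mul]; gcongr
    _ ≤ (A + C⁻¹) * (x + N) := by
        nlinarith [mul_nonneg hA hN, mul_nonneg (inv_nonneg.2 hC.le) hx]

theorem sigma2_convolution_symbol_bound_general {E : Type*} [NormedAddCommGroup E]
    [NormedSpace ℂ E]
    (φ φ₁ M lam₀ Ca Cb : ℝ) (hφ : 0 ≤ φ) (hφ₁ : 0 ≤ φ₁)
    (hangle : φ + φ₁ < Real.pi) (hM : 0 < M)
    (hCa : 0 ≤ Ca) (hCb : 0 < Cb) (l : ℕ)
    (R : ℝ → ℂ → E →L[ℂ] E)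
    (hbound : ∀ (ξ : ℝ) (mu : ℂ), |mu.arg| ≤ max φ φ₁ → ‖R ξ mu‖ ≤ M * (1 + ‖mu‖)⁻¹)
    (a : ℕ → ℝ → ℂ) (ha : ∀ (k : ℕ) (ξ : ℝ), ‖a k ξ‖ ≤ Ca)
    (L : ℝ → ℂ)
    (hLsec : ∀ ξ : ℝ, |(L ξ).arg| ≤ φ₁)
    (hLlow : ∀ ξ : ℝ, Cb * |ξ| ^ l * ∑ k ∈ Finset.range (l + 1), ‖a k ξ‖ < ‖L ξ‖) :
    ∃ Cc > (0 : ℝ), ∀ (ξ : ℝ) (lam : ℂ), |lam.arg| ≤ φ → lam₀ ≤ ‖lam‖ →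
      ‖∑ k ∈ Finset.range (l + 1),
          ((‖lam‖ ^ (1 - (k : ℝ) / (l : ℝ)) : ℝ) : ℂ) •
            ((a k ξ * (Complex.I * ξ) ^ k) • R ξ (lam + L ξ))‖ ≤ Cc := by
  set c := Real.cos ((φ + φ₁) / 2)
  have hc : 0 < c := Real.cos_pos_of_mem_Ioo ⟨by linarith [Real.pi_pos], by linarith⟩
  set K := ((l : ℝ) + 1) * Ca + Cb⁻¹
  have hK : 0 < K := add_pos_of_nonneg_of_pos (mul_nonneg (by positivity) hCa) (inv_pos.2 hCb)
  refine ⟨M * K / c, by positivity, fun ξ lam hlam _ => ?_⟩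
  set S := ∑ k ∈ range (l + 1), ‖a k ξ‖
  set P := ‖lam‖ + ‖L ξ‖
  have hLξ : 0 < ‖L ξ‖ := (by positivity : 0 ≤ Cb * |ξ| ^ l * S).trans_lt (hLlow ξ)
  have hP : 0 < P := add_pos_of_nonneg_of_pos (norm_nonneg _) hLξ
  have hR : ‖R ξ (lam + L ξ)‖ ≤ M / (c * P) := by
    refine (hbound ξ _ (abs_arg_add_le_max hlam (hLsec ξ) hangle)).trans ?_
    rw [div_eq_mul_inv]
    gcongr
    linarith [cos_mul_add_norm_le_norm_add hlam (hLsec ξ) (by linarith [Real.pi_pos])]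
  have hS : S ≤ ((l : ℝ) + 1) * Ca := by
    simpa using sum_le_sum fun k (_ : k ∈ range (l + 1)) => ha k ξ
  calc _ ≤ (‖lam‖ + |ξ| ^ l) * S * ‖R ξ (lam + L ξ)‖ :=
        norm_sum_rpow_smul_le l (norm_nonneg lam) ξ (a · ξ) _
    _ ≤ K * P * (M / (c * P)) :=
        mul_le_mul (add_mul_le_add_inv_mul_add (norm_nonneg lam) (norm_nonneg (L ξ))
          (mul_nonneg (by positivity) hCa) hCb hS (hLlow ξ).le) hR (norm_nonneg _) (by positivity)
    _ = M * K / c := by field_simp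

/-- Uniform boundedness of
`σ₂(ξ,λ) = Σ_{k=0}^l |λ|^{1−k/l} â_k(ξ)(iξ)^k [A(ξ)+λ+L(ξ)]⁻¹` for `λ ∈ S_φ`,
`|λ| ≥ λ₀ > 0`, with `A(ξ)` uniformly `φ`-positive, `â_k` bounded and
`|L(ξ)| > C|ξ|^l Σ_k |â_k(ξ)|`. -/
theorem sigma2_convolution_symbol_bound {E : Type*} [NormedAddCommGroup E]
    [NormedSpace ℂ E]
    (φ φ₁ M lam₀ Ca Cb : ℝ) (hφ : 0 ≤ φ) (hφ₁ : 0 ≤ φ₁)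
    (hangle : φ + φ₁ < Real.pi) (hM : 0 < M) (hlam₀ : 0 < lam₀)
    (hCa : 0 ≤ Ca) (hCb : 0 < Cb) (l : ℕ) (hl : 0 < l)
    (A : ℝ → E →L[ℂ] E) (R : ℝ → ℂ → E →L[ℂ] E)
    (hinv : ∀ (ξ : ℝ) (mu : ℂ), |mu.arg| ≤ max φ φ₁ →
      (A ξ + mu • ContinuousLinearMap.id ℂ E).comp (R ξ mu) = ContinuousLinearMap.id ℂ E ∧
      (R ξ mu).comp (A ξ + mu • ContinuousLinearMap.id ℂ E) = ContinuousLinearMap.id ℂ E)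
    (hbound : ∀ (ξ : ℝ) (mu : ℂ), |mu.arg| ≤ max φ φ₁ → ‖R ξ mu‖ ≤ M * (1 + ‖mu‖)⁻¹)
    (a : ℕ → ℝ → ℂ) (ha : ∀ (k : ℕ) (ξ : ℝ), ‖a k ξ‖ ≤ Ca)
    (L : ℝ → ℂ)
    (hLdef : ∀ ξ : ℝ, L ξ = ∑ k ∈ Finset.range (l + 1), a k ξ * (Complex.I * ξ) ^ k)
    (hLsec : ∀ ξ : ℝ, |(L ξ).arg| ≤ φ₁)
    (hLlow : ∀ ξ : ℝ, Cb * |ξ| ^ l * ∑ k ∈ Finset.range (l + 1), ‖a k ξ‖ < ‖L ξ‖) :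
    ∃ Cc > (0 : ℝ), ∀ (ξ : ℝ) (lam : ℂ), |lam.arg| ≤ φ → lam₀ ≤ ‖lam‖ →
      ‖∑ k ∈ Finset.range (l + 1),
          ((‖lam‖ ^ (1 - (k : ℝ) / (l : ℝ)) : ℝ) : ℂ) •
            ((a k ξ * (Complex.I * ξ) ^ k) • R ξ (lam + L ξ))‖ ≤ Cc :=
  sigma2_convolution_symbol_bound_general φ φ₁ M lam₀ Ca Cb hφ hφ₁ hangle hM hCa hCb l R hbound a ha
    L hLsec hLlow
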